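/- In the simulation of Theorem 1, every sentential form reachable in Π₁ contains at most one occurrence of a symbol from the marker set {P^j_i : 1 ≤ i ≤ n, 1 ≤ j ≤ 3} in the skin membrane, namely none: any string present in the skin membrane during a correct computation of Π₁ contains no marker symbols. -/

import Mathlib

inductive Tar where
  | here | inn | out
deriving DecidableEq

/-- A rule of an insertion-deletion P system: contexts, the inserted/deleted
string, a flag (`true` = insertion, `false` = deletion) and a target. -/
structure PRule (V : Type) where
  lctx : List V
  rctx : List V
  str  : List V
  isIns : Bool
  tar : Tar

/-- Insertion rule `(u, α, v; tar)_a`. -/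
def iRule {V : Type} (u α v : List V) (t : Tar) : PRule V := ⟨u, v, α, true, t⟩

/-- Deletion rule `(u, α, v; tar)_e`. -/
def dRule {V : Type} (u α v : List V) (t : Tar) : PRule V := ⟨u, v, α, false, t⟩

/-- `r.applies x y` : applying rule `r` to the string `x` can produce `y`. -/
def PRule.applies {V : Type} (r : PRule V) (x y : List V) : Prop :=
  if r.isIns then
    ∃ x₁ x₂, x = x₁ ++ r.lctx ++ r.rctx ++ x₂ ∧
             y = x₁ ++ r.lctx ++ r.str ++ r.rctx ++ x₂
  else
    ∃ x₁ x₂, x = x₁ ++ r.lctx ++ r.str ++ r.rctx ++ x₂ ∧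
             y = x₁ ++ r.lctx ++ r.rctx ++ x₂

/-- Size condition `(n,m,m';p,q,q')` on a rule. -/
def PRule.sizeOk {V : Type} (n m m' p q q' : ℕ) (r : PRule V) : Prop :=
  if r.isIns then r.str.length ≤ n ∧ r.lctx.length ≤ m ∧ r.rctx.length ≤ m'
  else r.str.length ≤ p ∧ r.lctx.length ≤ q ∧ r.rctx.length ≤ q'

/-- An insertion-deletion P system with `k` linearly nested membranes
(region `0` is the skin membrane, region `i+1` is immediately inside region `i`),
terminal alphabet `T ⊆ V`, initial languages `M i` and rule sets `R i`. -/
structure PSys (V : Type) (k : ℕ) where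
  T : Set V
  M : Fin k → Set (List V)
  R : Fin k → Set (PRule V)

/-- The region where a string produced in region `i` with target `t` is placed;
`none` means the string leaves the system (target `out` in the skin membrane). -/
def tarRegion {k : ℕ} (i : Fin k) : Tar → Option (Fin k)
  | Tar.here => some i
  | Tar.inn => if h : i.val + 1 < k then some ⟨i.val + 1, h⟩ else none
  | Tar.out =>
      if 0 < i.val then some ⟨i.val - 1, Nat.lt_of_le_of_lt (Nat.sub_le _ _) i.isLt⟩
      else none

/-- `InReg Sys i w` : during some computation of `Sys`, the string `w` appears in
region `i` (strings persist in arbitrarily many copies, so reachability is the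
appropriate semantics). -/
inductive InReg {V : Type} {k : ℕ} (Sys : PSys V k) : Fin k → List V → Prop where
  | init {i : Fin k} {w : List V} : w ∈ Sys.M i → InReg Sys i w
  | step {i j : Fin k} {w w' : List V} (r : PRule V) :
      InReg Sys i w → r ∈ Sys.R i → r.applies w w' → tarRegion i r.tar = some j →
      InReg Sys j w'

/-- The language generated by `Sys`: all terminal strings sent out of the skin
membrane at any time during a computation. -/
def PLang {V : Type} {k : ℕ} (Sys : PSys V k) : Set (List V) :=
  {w | (∀ a ∈ w, a ∈ Sys.T) ∧
    ∃ (i : Fin k) (w' : List V) (r : PRule V),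
      InReg Sys i w' ∧ i.val = 0 ∧ r ∈ Sys.R i ∧ r.tar = Tar.out ∧ r.applies w' w}

/-- A production of a grammar in Penttonen normal form:
`AB → AC`, `A → BC`, `A → α` (`α ∈ T ∪ N`), or `A → ε`. -/
inductive PForm (T N : Type) where
  | cs (A B C : N)
  | split (A B C : N)
  | unit (A : N) (a : T ⊕ N)
  | eps (A : N)

/-- The alphabet of `Π₁`: grammar symbols, markers `P_i^j` (`j ∈ {1,2,3}`,
encoded as `Fin 3`), and the end marker `X`. -/
abbrev Vt (T N : Type) : Type := (T ⊕ N) ⊕ ((ℕ × Fin 3) ⊕ Unit)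

/-- A grammar symbol as a symbol of `Π₁`. -/
def sym (T N : Type) (a : T ⊕ N) : Vt T N := Sum.inl a

/-- A nonterminal as a symbol of `Π₁`. -/
def nt (T N : Type) (A : N) : Vt T N := Sum.inl (Sum.inr A)

/-- The marker `P_i^j` (here `j : Fin 3` encodes the superscript `j+1`). -/
def mrk (T N : Type) (i : ℕ) (j : Fin 3) : Vt T N := Sum.inr (Sum.inl (i, j))

/-- The end marker `X`. -/
def Xsym (T N : Type) : Vt T N := Sum.inr (Sum.inr ())

/-- Rules of the skin membrane of `Π₁`. -/
def R1set (T N : Type) (rs : List (PForm T N)) : Set (PRule (Vt T N)) :=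
  {r | (∃ k A B C, rs[k]? = some (PForm.cs A B C) ∧
          r = iRule [nt T N A] [mrk T N k 0] [] Tar.inn) ∨
       (∃ k A B C, rs[k]? = some (PForm.split A B C) ∧
          r = iRule [nt T N A] [mrk T N k 0] [] Tar.inn) ∨
       (∃ k A a, rs[k]? = some (PForm.unit A a) ∧
          r = iRule [nt T N A] [mrk T N k 0] [] Tar.inn) ∨
       (∃ k A, rs[(k : ℕ)]? = some (PForm.eps A) ∧
          r = dRule [] [nt T N A] [] Tar.here) ∨
       r = dRule [] [Xsym T N] [] Tar.out}

/-- Rules of membrane 2 of `Π₁`. -/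
def R2set (T N : Type) (rs : List (PForm T N)) : Set (PRule (Vt T N)) :=
  {r | (∃ k A B C, rs[k]? = some (PForm.cs A B C) ∧
          (r = iRule [mrk T N k 0] [mrk T N k 1] [] Tar.inn ∨
           r = dRule [] [mrk T N k 0, mrk T N k 2] [] Tar.out)) ∨
       (∃ k A B C, rs[k]? = some (PForm.split A B C) ∧
          (r = iRule [mrk T N k 0] [mrk T N k 1] [] Tar.inn ∨
           r = dRule [] [mrk T N k 1] [] Tar.out)) ∨
       (∃ k A a, rs[k]? = some (PForm.unit A a) ∧
          (r = iRule [mrk T N k 0] [sym T N a] [] Tar.inn ∨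
           r = dRule [] [mrk T N k 1, mrk T N k 2] [] Tar.out))}

/-- Rules of membrane 3 of `Π₁`. -/
def R3set (T N : Type) (rs : List (PForm T N)) : Set (PRule (Vt T N)) :=
  {r | (∃ k A B C, rs[k]? = some (PForm.cs A B C) ∧
          (r = dRule [] [mrk T N k 1, nt T N B] [] Tar.inn ∨
           r = iRule [mrk T N k 2] [nt T N C] [] Tar.out)) ∨
       (∃ k A B C, rs[k]? = some (PForm.split A B C) ∧
          (r = iRule [mrk T N k 0] [nt T N B] [] Tar.inn ∨
           r = dRule [] [mrk T N k 2] [] Tar.out)) ∨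
       (∃ k A a, rs[k]? = some (PForm.unit A a) ∧
          (r = iRule [mrk T N k 0] [mrk T N k 1] [] Tar.inn ∨
           r = iRule [mrk T N k 1] [mrk T N k 2] [] Tar.out))}

/-- Rules of membrane 4 of `Π₁`. -/
def R4set (T N : Type) (rs : List (PForm T N)) : Set (PRule (Vt T N)) :=
  {r | (∃ k A B C, rs[k]? = some (PForm.cs A B C) ∧
          r = iRule [mrk T N k 0] [mrk T N k 2] [] Tar.out) ∨
       (∃ k A B C, rs[k]? = some (PForm.split A B C) ∧
          (r = dRule [] [nt T N A, mrk T N k 0] [] Tar.inn ∨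
           r = iRule [mrk T N k 2] [nt T N C] [] Tar.out)) ∨
       (∃ k A a, rs[k]? = some (PForm.unit A a) ∧
          r = dRule [] [nt T N A, mrk T N k 0] [] Tar.out)}

/-- Rules of membrane 5 of `Π₁`. -/
def R5set (T N : Type) (rs : List (PForm T N)) : Set (PRule (Vt T N)) :=
  {r | ∃ k A B C, rs[k]? = some (PForm.split A B C) ∧
          r = iRule [mrk T N k 1] [mrk T N k 2] [] Tar.out}

/-- The P system `Π₁` of Theorem 1, simulating the Penttonen normal form
grammar with start symbol `S` and (ordered) productions `rs`; the axiom is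
`SX` in the skin membrane. -/
def Pi1 (T N : Type) (S : N) (rs : List (PForm T N)) : PSys (Vt T N) 5 where
  T := {a | ∃ t : T, a = Sum.inl (Sum.inl t)}
  M := fun i => if i = 0 then {[nt T N S, Xsym T N]} else ∅
  R := fun i =>
    if i.val = 0 then R1set T N rs
    else if i.val = 1 then R2set T N rs
    else if i.val = 2 then R3set T N rs
    else if i.val = 3 then R4set T N rs
    else R5set T N rs



/-!
A string of `Π₁` never carries markers of two productions: the only rules that introduce a
fresh marker `P₀` act in the skin, and every other rule needs a marker of its own production
already present. So each reachable string is a marker-free word with one contiguous block of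
markers of a single production `k` inserted, and membrane by membrane only a handful of
blocks can occur (`PForm.blocks`). Checking the rules of production `k` against these blocks,
every rule that sends a string back to the skin deletes the last markers of its block.
-/

section MarkerBlocks

variable {V : Type} {M : Set V}

def MarkerFree (M : Set V) (w : List V) : Prop := ∀ a ∈ w, a ∉ M

@[simp] lemma markerFree_nil : MarkerFree M [] := by simp [MarkerFree]

@[simp] lemma markerFree_cons {a : V} {w : List V} :
    MarkerFree M (a :: w) ↔ a ∉ M ∧ MarkerFree M w :=
  List.forall_mem_cons

@[simp] lemma markerFree_append {x y : List V} :
    MarkerFree M (x ++ y) ↔ MarkerFree M x ∧ MarkerFree M y :=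
  List.forall_mem_append

lemma MarkerFree.not_mem {w : List V} (h : MarkerFree M w) {a : V} (ha : a ∈ M) : a ∉ w :=
  fun haw => h a haw ha

def MarkerBlock (M : Set V) (b w : List V) : Prop :=
  ∃ x z, MarkerFree M x ∧ MarkerFree M z ∧ w = x ++ b ++ z

lemma applies_iRule_iff {c s : V} {t : Tar} {w w' : List V} :
    (iRule [c] [s] [] t).applies w w' ↔
      ∃ x₁ x₂, w = x₁ ++ c :: x₂ ∧ w' = x₁ ++ c :: s :: x₂ := by
  simp [iRule, PRule.applies]

lemma applies_dRule_iff {α : List V} {t : Tar} {w w' : List V} :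
    (dRule [] α [] t).applies w w' ↔ ∃ x₁ x₂, w = x₁ ++ α ++ x₂ ∧ w' = x₁ ++ x₂ := by
  simp [dRule, PRule.applies]

lemma mem_of_applies_iRule {c s : V} {t : Tar} {w w' : List V}
    (h : (iRule [c] [s] [] t).applies w w') : c ∈ w := by
  obtain ⟨x₁, x₂, rfl, -⟩ := applies_iRule_iff.1 h
  simp

lemma mem_of_applies_dRule {α : List V} {t : Tar} {w w' : List V}
    (h : (dRule [] α [] t).applies w w') {a : V} (ha : a ∈ α) : a ∈ w := by
  obtain ⟨x₁, x₂, rfl, -⟩ := applies_dRule_iff.1 h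
  simp [ha]

lemma MarkerFree.of_applies_dRule {α : List V} {t : Tar} {w w' : List V}
    (hw : MarkerFree M w) (h : (dRule [] α [] t).applies w w') : MarkerFree M w' := by
  obtain ⟨x₁, x₂, rfl, rfl⟩ := applies_dRule_iff.1 h
  simp_all

lemma MarkerFree.markerBlock_of_applies_iRule {c s : V} {t : Tar} {w w' : List V}
    (hw : MarkerFree M w) (h : (iRule [c] [s] [] t).applies w w') :
    MarkerBlock M [s] w' := by
  obtain ⟨x₁, x₂, rfl, rfl⟩ := applies_iRule_iff.1 h
  simp only [markerFree_append, markerFree_cons] at hw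
  exact ⟨x₁ ++ [c], x₂, by simp [hw], hw.2.2, by simp⟩

namespace MarkerBlock

lemma markerFree {w : List V} (h : MarkerBlock M [] w) : MarkerFree M w := by
  obtain ⟨x, z, hx, hz, rfl⟩ := h
  simp [hx, hz]

lemma mem {b w : List V} (h : MarkerBlock M b w) {a : V} (haM : a ∈ M) (ha : a ∈ w) :
    a ∈ b := by
  obtain ⟨x, z, hx, hz, rfl⟩ := h
  simp only [List.mem_append] at ha
  rcases ha with (ha | ha) | ha
  · exact absurd haM (hx a ha)
  · exact ha
  · exact absurd haM (hz a ha)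

lemma of_append_left {b b' w : List V} (h : MarkerBlock M (b' ++ b) w)
    (hb' : MarkerFree M b') : MarkerBlock M b w := by
  obtain ⟨x, z, hx, hz, rfl⟩ := h
  exact ⟨x ++ b', z, by simp [hx, hb'], hz, by simp⟩

lemma of_append_right {b b' w : List V} (h : MarkerBlock M (b ++ b') w)
    (hb' : MarkerFree M b') : MarkerBlock M b w := by
  obtain ⟨x, z, hx, hz, rfl⟩ := h
  exact ⟨x, b' ++ z, hx, by simp [hz, hb'], by simp⟩

lemma split_at {b₁ b₂ w x₁ x₂ : List V} {c : V} (h : MarkerBlock M (b₁ ++ c :: b₂) w)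
    (hc : c ∈ M) (hc₁ : c ∉ b₁) (hc₂ : c ∉ b₂) (hw : w = x₁ ++ c :: x₂) :
    ∃ x z, MarkerFree M x ∧ MarkerFree M z ∧ x₁ = x ++ b₁ ∧ x₂ = b₂ ++ z := by
  obtain ⟨x, z, hx, hz, rfl⟩ := h
  have hsplit : (x ++ b₁) ++ c :: (b₂ ++ z) = x₁ ++ c :: x₂ := by simpa using hw
  rw [List.append_cons_inj_of_notMem (by simp [hc₁, hx.not_mem hc])
    (by simp [hc₂, hz.not_mem hc])] at hsplit
  exact ⟨x, z, hx, hz, hsplit.1.symm, hsplit.2.2.symm⟩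

lemma ins {b₁ b₂ w w' : List V} {c s : V} {t : Tar} (h : MarkerBlock M (b₁ ++ c :: b₂) w)
    (happ : (iRule [c] [s] [] t).applies w w')
    (hc : c ∈ M := by simp) (hc₁ : c ∉ b₁ := by simp) (hc₂ : c ∉ b₂ := by simp) :
    MarkerBlock M (b₁ ++ c :: s :: b₂) w' := by
  obtain ⟨x₁, x₂, hw, rfl⟩ := applies_iRule_iff.1 happ
  obtain ⟨x, z, hx, hz, rfl, rfl⟩ := h.split_at hc hc₁ hc₂ hw
  exact ⟨x, z, hx, hz, by simp⟩

lemma ins_last {b w w' : List V} {c s : V} {t : Tar} (h : MarkerBlock M (b ++ [c]) w)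
    (happ : (iRule [c] [s] [] t).applies w w')
    (hc : c ∈ M := by simp) (hcb : c ∉ b := by simp) (hs : s ∉ M := by simp) :
    MarkerBlock M (b ++ [c]) w' :=
  of_append_right (b' := [s]) (by simpa using h.ins happ hc hcb List.not_mem_nil)
    (by simpa)

lemma del {b₁ b₂ w w' : List V} {c : V} {t : Tar} (h : MarkerBlock M (b₁ ++ c :: b₂) w)
    (happ : (dRule [] [c] [] t).applies w w')
    (hc : c ∈ M := by simp) (hc₁ : c ∉ b₁ := by simp) (hc₂ : c ∉ b₂ := by simp) :
    MarkerBlock M (b₁ ++ b₂) w' := by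
  obtain ⟨x₁, x₂, hw, rfl⟩ := applies_dRule_iff.1 happ
  obtain ⟨x, z, hx, hz, rfl, rfl⟩ := h.split_at hc hc₁ hc₂ (by simpa using hw)
  exact ⟨x, z, hx, hz, by simp⟩

lemma del_pair {b₁ b₂ w w' : List V} {c d : V} {t : Tar} (h : MarkerBlock M (b₁ ++ c :: b₂) w)
    (happ : (dRule [] [c, d] [] t).applies w w')
    (hc : c ∈ M := by simp) (hc₁ : c ∉ b₁ := by simp) (hc₂ : c ∉ b₂ := by simp)
    (hd : d ∈ M := by simp) :
    ∃ b₂', b₂ = d :: b₂' ∧ MarkerBlock M (b₁ ++ b₂') w' := by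
  obtain ⟨x₁, x₂, hw, rfl⟩ := applies_dRule_iff.1 happ
  obtain ⟨x, z, hx, hz, rfl, hx₂⟩ := h.split_at hc hc₁ hc₂ (by simpa using hw)
  cases b₂ with
  | nil =>
    rw [List.nil_append] at hx₂
    exact absurd (hx₂ ▸ List.mem_cons_self) (hz.not_mem hd)
  | cons e b₂' =>
    simp only [List.cons_append, List.cons.injEq] at hx₂
    obtain ⟨rfl, rfl⟩ := hx₂
    exact ⟨b₂', rfl, x, z, hx, hz, by simp⟩

lemma del_pair_head {b w w' : List V} {c d : V} {t : Tar} (h : MarkerBlock M (c :: b) w)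
    (happ : (dRule [] [d, c] [] t).applies w w')
    (hc : c ∈ M := by simp) (hcb : c ∉ b := by simp) :
    MarkerBlock M b w' := by
  obtain ⟨x₁, x₂, hw, rfl⟩ := applies_dRule_iff.1 happ
  obtain ⟨x, z, hx, hz, hx₁, rfl⟩ :=
    h.split_at (b₁ := []) hc List.not_mem_nil hcb (x₁ := x₁ ++ [d]) (by simpa using hw)
  rw [List.append_nil] at hx₁
  subst hx₁
  exact ⟨x₁, z, (markerFree_append.1 hx).1, hz, by simp⟩

lemma del_pair_last {b w w' : List V} {c d : V} {t : Tar} (h : MarkerBlock M b w)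
    (happ : (dRule [] [c, d] [] t).applies w w')
    (hb : ∀ a ∈ b, a ∈ M := by simp) (hc : c ∈ M := by simp) (hd : d ∉ M := by simp) :
    ∃ b', b = b' ++ [c] ∧ MarkerBlock M b' w' := by
  obtain ⟨x, z, hx, hz, rfl⟩ := h
  obtain ⟨x₁, x₂, hw, rfl⟩ := applies_dRule_iff.1 happ
  have hprefix : ∃ y, x₁ = x ++ y ∧ b ++ z = y ++ c :: d :: x₂ := by
    simp only [List.append_assoc, List.cons_append, List.nil_append] at hw
    rcases List.append_eq_append_iff.1 hw with ⟨y, rfl, hy⟩ | ⟨y, rfl, hy⟩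
    · exact ⟨y, rfl, hy⟩
    · cases y with
      | nil => exact ⟨[], by simp, by simpa using hy.symm⟩
      | cons e y =>
        obtain ⟨rfl, -⟩ := List.cons.inj hy
        exact absurd (by simp) (hx.not_mem hc)
  obtain ⟨y, rfl, hy⟩ := hprefix
  rcases List.append_eq_append_iff.1 hy with ⟨e, rfl, rfl⟩ | ⟨e, rfl, he⟩
  · exact absurd (by simp) (hz.not_mem hc)
  rcases List.cons_eq_append_iff.1 he with ⟨rfl, rfl⟩ | ⟨e', rfl, he'⟩
  · exact absurd (by simp) (hz.not_mem hc)
  rcases List.cons_eq_append_iff.1 he' with ⟨rfl, rfl⟩ | ⟨e'', rfl, -⟩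
  · exact ⟨y, rfl, x, x₂, hx, (markerFree_cons.1 hz).2, by simp⟩
  · exact absurd (hb d (by simp)) hd

end MarkerBlock

end MarkerBlocks

section Pi1

variable {T N : Type}

def markers : Set (Vt T N) := Set.range fun p : ℕ × Fin 3 => mrk T N p.1 p.2

@[simp] lemma mrk_mem_markers (k : ℕ) (j : Fin 3) : mrk T N k j ∈ markers := ⟨(k, j), rfl⟩

@[simp] lemma sym_not_mem_markers (a : T ⊕ N) : sym T N a ∉ markers := by
  simp [markers, sym, mrk]

@[simp] lemma nt_not_mem_markers (A : N) : nt T N A ∉ markers := by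
  simp [markers, nt, mrk]

@[simp] lemma mrk_inj {k k' : ℕ} {j j' : Fin 3} :
    mrk T N k j = mrk T N k' j' ↔ k = k' ∧ j = j' := by
  simp [mrk]

@[simp] lemma mrk_ne_nt (k : ℕ) (j : Fin 3) (A : N) : mrk T N k j ≠ nt T N A := by
  simp [mrk, nt]

/-- `P₀ P₁ⁿ P₂`: once `P₂` is in place the membrane-2 rule of `AB → AC` can still insert `P₁`s;
such strings are stuck. -/
def markerRun (T N : Type) (k n : ℕ) : List (Vt T N) :=
  mrk T N k 0 :: List.replicate n (mrk T N k 1) ++ [mrk T N k 2]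

lemma mem_markers_of_mem_markerRun {k n : ℕ} {a : Vt T N} (h : a ∈ markerRun T N k n) :
    a ∈ markers := by
  simp only [markerRun, List.cons_append, List.mem_cons, List.mem_append, List.mem_replicate,
    List.not_mem_nil, or_false] at h
  rcases h with rfl | ⟨-, rfl⟩ | rfl <;> simp

/-- The blocks a string may carry in region `i` (membrane `i + 1`) while the `k`-th production
`p` is being simulated; there are none in the skin. -/
def PForm.blocks (k : ℕ) : PForm T N → ℕ → Set (List (Vt T N))
  | .cs _ _ _, 1 => insert [mrk T N k 0] (Set.range (markerRun T N k))
  | .cs _ _ _, 2 => insert [mrk T N k 0, mrk T N k 1] (Set.range (markerRun T N k))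
  | .cs _ _ _, 3 => {[mrk T N k 0]}
  | .split _ _ _, 1 => {[mrk T N k 0], [mrk T N k 1]}
  | .split _ _ _, 2 => {[mrk T N k 0, mrk T N k 1], [mrk T N k 1, mrk T N k 2]}
  | .split _ B _, 3 => {[mrk T N k 0, nt T N B, mrk T N k 1], [mrk T N k 1, mrk T N k 2]}
  | .split _ _ _, 4 => {[mrk T N k 1]}
  | .unit _ _, 1 => {[mrk T N k 0], [mrk T N k 1, mrk T N k 2]}
  | .unit _ _, 2 => {[mrk T N k 0], [mrk T N k 1]}
  | .unit _ _, 3 => {[mrk T N k 0, mrk T N k 1]}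
  | _, _ => ∅

lemma PForm.index_eq_of_mem_blocks {p : PForm T N} {k k' i : ℕ} {j : Fin 3}
    {b : List (Vt T N)} (hb : b ∈ p.blocks k i) (hm : mrk T N k' j ∈ b) : k' = k := by
  unfold PForm.blocks at hb
  split at hb <;>
    simp only [Set.mem_insert_iff, Set.mem_singleton_iff, Set.mem_range,
      Set.mem_empty_iff_false] at hb <;>
    aesop (add norm simp [markerRun, List.mem_replicate])

def WellMarked (rs : List (PForm T N)) (i : Fin 5) (w : List (Vt T N)) : Prop :=
  (i = 0 ∧ MarkerFree markers w) ∨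
    ∃ (k : ℕ) (p : PForm T N) (b : List (Vt T N)),
      rs[k]? = some p ∧ b ∈ p.blocks k i ∧ MarkerBlock markers b w

namespace WellMarked

variable {rs : List (PForm T N)} {i : Fin 5} {w : List (Vt T N)}

lemma of_markerFree (h : MarkerFree markers w) : WellMarked rs 0 w := Or.inl ⟨rfl, h⟩

lemma of_block {k : ℕ} {p : PForm T N} {b : List (Vt T N)} (hk : rs[k]? = some p)
    (hb : b ∈ p.blocks k i) (h : MarkerBlock markers b w) : WellMarked rs i w :=
  Or.inr ⟨k, p, b, hk, hb, h⟩

lemma markerFree (h : WellMarked rs 0 w) : MarkerFree markers w := by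
  rcases h with ⟨-, h⟩ | ⟨k, p, b, -, hb, -⟩
  · exact h
  · cases p <;> simp [PForm.blocks] at hb

lemma exists_block (h : WellMarked rs i w) {k : ℕ} {p : PForm T N} (hk : rs[k]? = some p)
    {j : Fin 3} (hm : mrk T N k j ∈ w) :
    ∃ b ∈ p.blocks k i, mrk T N k j ∈ b ∧ MarkerBlock markers b w := by
  rcases h with ⟨-, h⟩ | ⟨k', p', b, hk', hb, hw⟩
  · exact absurd hm (h.not_mem (mrk_mem_markers k j))
  have hmb := hw.mem (mrk_mem_markers k j) hm
  obtain rfl := PForm.index_eq_of_mem_blocks hb hmb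
  obtain rfl : p = p' := Option.some_inj.mp (hk.symm.trans hk')
  exact ⟨b, hb, hmb, hw⟩

variable {r : PRule (Vt T N)} {w' : List (Vt T N)} {j : Fin 5}

lemma step_skin (hr : r ∈ R1set T N rs) (happ : r.applies w w')
    (htar : tarRegion (0 : Fin 5) r.tar = some j) (hw : MarkerFree markers w) :
    WellMarked rs j w' := by
  rcases hr with ⟨k, A, B, C, hk, rfl⟩ | ⟨k, A, B, C, hk, rfl⟩ | ⟨k, A, a, hk, rfl⟩ |
    ⟨k, A, hk, rfl⟩ | rfl
  iterate 3
    obtain rfl : (1 : Fin 5) = j := Option.some_inj.mp htar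
    exact .of_block hk (by simp [PForm.blocks]) (hw.markerBlock_of_applies_iRule happ)
  · obtain rfl : (0 : Fin 5) = j := Option.some_inj.mp htar
    exact .of_markerFree (hw.of_applies_dRule happ)
  · simp [dRule, tarRegion] at htar

lemma step_one (hr : r ∈ R2set T N rs) (happ : r.applies w w')
    (htar : tarRegion (1 : Fin 5) r.tar = some j) (h : WellMarked rs 1 w) :
    WellMarked rs j w' := by
  rcases hr with ⟨k, A, B, C, hk, rfl | rfl⟩ | ⟨k, A, B, C, hk, rfl | rfl⟩ |
    ⟨k, A, a, hk, rfl | rfl⟩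
  · obtain rfl : (2 : Fin 5) = j := Option.some_inj.mp htar
    obtain ⟨_, rfl | ⟨n, rfl⟩, -, hw⟩ := h.exists_block hk (mem_of_applies_iRule happ)
    · exact .of_block hk (by simp [PForm.blocks]) (hw.ins (b₁ := []) happ)
    · exact .of_block hk (Or.inr ⟨n + 1, by simp [markerRun, List.replicate_succ]⟩)
        (hw.ins (b₁ := []) happ)
  · obtain rfl : (0 : Fin 5) = j := Option.some_inj.mp htar
    obtain ⟨_, rfl | ⟨n, rfl⟩, -, hw⟩ :=
      h.exists_block hk (mem_of_applies_dRule happ List.mem_cons_self)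
    · obtain ⟨_, ⟨⟩, -⟩ := hw.del_pair (b₁ := []) happ
    · obtain ⟨b₂, hb₂, hw'⟩ := hw.del_pair (b₁ := []) happ
      -- `P₂` follows `P₀` only in the run without `P₁`s
      cases n <;> simp [List.replicate_succ] at hb₂
      subst hb₂
      exact .of_markerFree hw'.markerFree
  · obtain rfl : (2 : Fin 5) = j := Option.some_inj.mp htar
    obtain ⟨_, rfl | rfl, hm, hw⟩ := h.exists_block hk (mem_of_applies_iRule happ)
    · exact .of_block hk (by simp [PForm.blocks]) (hw.ins (b₁ := []) happ)
    · simp at hm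
  · obtain rfl : (0 : Fin 5) = j := Option.some_inj.mp htar
    obtain ⟨_, rfl | rfl, hm, hw⟩ :=
      h.exists_block hk (mem_of_applies_dRule happ List.mem_cons_self)
    · simp at hm
    · exact .of_markerFree (hw.del (b₁ := []) happ).markerFree
  · obtain rfl : (2 : Fin 5) = j := Option.some_inj.mp htar
    obtain ⟨_, rfl | rfl, hm, hw⟩ := h.exists_block hk (mem_of_applies_iRule happ)
    · exact .of_block hk (by simp [PForm.blocks]) (hw.ins_last (b := []) happ)
    · simp at hm
  · obtain rfl : (0 : Fin 5) = j := Option.some_inj.mp htar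
    obtain ⟨_, rfl | rfl, hm, hw⟩ :=
      h.exists_block hk (mem_of_applies_dRule happ List.mem_cons_self)
    · simp at hm
    · obtain ⟨_, ⟨⟩, hw'⟩ := hw.del_pair (b₁ := []) happ
      exact .of_markerFree hw'.markerFree

lemma step_two (hr : r ∈ R3set T N rs) (happ : r.applies w w')
    (htar : tarRegion (2 : Fin 5) r.tar = some j) (h : WellMarked rs 2 w) :
    WellMarked rs j w' := by
  rcases hr with ⟨k, A, B, C, hk, rfl | rfl⟩ | ⟨k, A, B, C, hk, rfl | rfl⟩ |
    ⟨k, A, a, hk, rfl | rfl⟩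
  · obtain rfl : (3 : Fin 5) = j := Option.some_inj.mp htar
    obtain ⟨_, rfl | ⟨n, rfl⟩, -, hw⟩ :=
      h.exists_block hk (mem_of_applies_dRule happ List.mem_cons_self)
    · obtain ⟨b', hb', hw'⟩ := hw.del_pair_last happ
      obtain rfl : b' = [mrk T N k 0] := List.append_left_injective _ hb'.symm
      exact .of_block hk (by simp [PForm.blocks]) hw'
    · -- a `P₁` of a run is followed by a marker, never by `B`
      obtain ⟨b', hb', -⟩ := hw.del_pair_last happ (fun _ => mem_markers_of_mem_markerRun)
      rw [markerRun, List.append_singleton_inj] at hb'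
      simp at hb'
  · obtain rfl : (1 : Fin 5) = j := Option.some_inj.mp htar
    obtain ⟨_, rfl | ⟨n, rfl⟩, hm, hw⟩ := h.exists_block hk (mem_of_applies_iRule happ)
    · simp at hm
    · exact .of_block hk (Or.inr ⟨n, rfl⟩)
        (hw.ins_last (b := mrk T N k 0 :: List.replicate n (mrk T N k 1)) happ
          (hcb := by simp [List.mem_replicate]))
  · obtain rfl : (3 : Fin 5) = j := Option.some_inj.mp htar
    obtain ⟨_, rfl | rfl, hm, hw⟩ := h.exists_block hk (mem_of_applies_iRule happ)
    · exact .of_block hk (by simp [PForm.blocks]) (hw.ins (b₁ := []) happ)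
    · simp at hm
  · obtain rfl : (1 : Fin 5) = j := Option.some_inj.mp htar
    obtain ⟨_, rfl | rfl, hm, hw⟩ :=
      h.exists_block hk (mem_of_applies_dRule happ List.mem_cons_self)
    · simp at hm
    · exact .of_block hk (by simp [PForm.blocks]) (hw.del (b₁ := [mrk T N k 1]) happ)
  · obtain rfl : (3 : Fin 5) = j := Option.some_inj.mp htar
    obtain ⟨_, rfl | rfl, hm, hw⟩ := h.exists_block hk (mem_of_applies_iRule happ)
    · exact .of_block hk (by simp [PForm.blocks]) (hw.ins (b₁ := []) happ)
    · simp at hm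
  · obtain rfl : (1 : Fin 5) = j := Option.some_inj.mp htar
    obtain ⟨_, rfl | rfl, hm, hw⟩ := h.exists_block hk (mem_of_applies_iRule happ)
    · simp at hm
    · exact .of_block hk (by simp [PForm.blocks]) (hw.ins (b₁ := []) happ)

lemma step_three (hr : r ∈ R4set T N rs) (happ : r.applies w w')
    (htar : tarRegion (3 : Fin 5) r.tar = some j) (h : WellMarked rs 3 w) :
    WellMarked rs j w' := by
  rcases hr with ⟨k, A, B, C, hk, rfl⟩ | ⟨k, A, B, C, hk, rfl | rfl⟩ | ⟨k, A, a, hk, rfl⟩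
  · obtain rfl : (2 : Fin 5) = j := Option.some_inj.mp htar
    obtain ⟨_, rfl, -, hw⟩ := h.exists_block hk (mem_of_applies_iRule happ)
    exact .of_block hk (Or.inr ⟨0, rfl⟩) (hw.ins (b₁ := []) happ)
  · obtain rfl : (4 : Fin 5) = j := Option.some_inj.mp htar
    obtain ⟨_, rfl | rfl, hm, hw⟩ :=
      h.exists_block hk (j := 0) (mem_of_applies_dRule happ (by simp))
    · exact .of_block hk (by simp [PForm.blocks])
        ((hw.del_pair_head happ).of_append_left (b' := [nt T N B]) (by simp))
    · simp at hm
  · obtain rfl : (2 : Fin 5) = j := Option.some_inj.mp htar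
    obtain ⟨_, rfl | rfl, hm, hw⟩ := h.exists_block hk (mem_of_applies_iRule happ)
    · simp at hm
    · exact .of_block hk (by simp [PForm.blocks]) (hw.ins_last (b := [mrk T N k 1]) happ)
  · obtain rfl : (2 : Fin 5) = j := Option.some_inj.mp htar
    obtain ⟨_, rfl, -, hw⟩ := h.exists_block hk (j := 0) (mem_of_applies_dRule happ (by simp))
    exact .of_block hk (by simp [PForm.blocks]) (hw.del_pair_head happ)

lemma step_four (hr : r ∈ R5set T N rs) (happ : r.applies w w')
    (htar : tarRegion (4 : Fin 5) r.tar = some j) (h : WellMarked rs 4 w) :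
    WellMarked rs j w' := by
  obtain ⟨k, A, B, C, hk, rfl⟩ := hr
  obtain rfl : (3 : Fin 5) = j := Option.some_inj.mp htar
  obtain ⟨_, rfl, -, hw⟩ := h.exists_block hk (mem_of_applies_iRule happ)
  exact .of_block hk (by simp [PForm.blocks]) (hw.ins (b₁ := []) happ)

end WellMarked

lemma wellMarked_of_inReg {S : N} {rs : List (PForm T N)} {i : Fin 5}
    {w : List (Vt T N)} (h : InReg (Pi1 T N S rs) i w) : WellMarked rs i w := by
  induction h with
  | @init i w hw =>
    by_cases hi : i = 0
    · subst hi
      obtain rfl : w = [nt T N S, Xsym T N] := by simpa [Pi1] using hw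
      exact .of_markerFree (by simp [markers, mrk, nt, Xsym])
    · simp [Pi1, hi] at hw
  | @step i j w w' r _ hr happ htar ih =>
    fin_cases i
    · exact .step_skin (by simpa [Pi1] using hr) happ htar ih.markerFree
    · exact .step_one (by simpa [Pi1] using hr) happ htar ih
    · exact .step_two (by simpa [Pi1] using hr) happ htar ih
    · exact .step_three (by simpa [Pi1] using hr) happ htar ih
    · exact .step_four (by simpa [Pi1] using hr) happ htar ih

end Pi1

/-- in the simulation of Theorem 1, every string reachable in the
skin membrane of `Π₁` contains no marker symbol `P_i^j`. -/
theorem stmt16 (T N : Type) (S : N) (rs : List (PForm T N)) (w : List (Vt T N))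
    (h : InReg (Pi1 T N S rs) 0 w) :
    ∀ i : ℕ, ∀ j : Fin 3, mrk T N i j ∉ w :=
  fun i j => (wellMarked_of_inReg h).markerFree.not_mem (mrk_mem_markers i j)
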